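/- arXiv:1908.05386 — 5 statements merged into one kernel-verified Lean document; each statement's English description precedes it below -/
import Mathlib

section
/- For all real u, the function d_h(u) = (5/6)·1[u>1] + (u - u³/6)·1[-1≤u≤1] - (5/6)·1[u<-1] satisfies d_h(u) ≤ ln(1 + u + u²/2). -/
noncomputable def dh (u : ℝ) : ℝ :=
  if u > 1 then 5/6 else if u < -1 then -5/6 else u - u^3/6

/-! On `[-1, 1]` the fourth-order Taylor bound for `exp` reduces `exp (u - u³/6) ≤ 1 + u + u²/2`
to `u⁴ · Q u ≥ 0` for an explicit polynomial `Q`, which is positive on `[-1, 1]` by termwise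
bounds. The two constant branches of `dh` are its values at `u = ±1`: `1 + u + u²/2` is
increasing for `u ≥ -1`, and at least `1/2` everywhere. -/

open Real

lemma exp_le_quartic_of_abs_le_one {t : ℝ} (ht : |t| ≤ 1) :
    exp t ≤ 1 + t + t^2/2 + t^3/6 + 5/96 * t^4 := by
  have h := Real.exp_bound ht (n := 4) (by norm_num)
  norm_num [Finset.sum_range_succ, Nat.factorial, pow_abs,
    abs_of_nonneg (by positivity : 0 ≤ t ^ 4)] at h
  linarith [(abs_le.mp h).2]

lemma exp_sub_cube_div_six_le {u : ℝ} (h1 : -1 ≤ u) (h2 : u ≤ 1) :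
    exp (u - u^3/6) ≤ 1 + u + u^2/2 := by
  have hu : |u| ≤ 1 := abs_le.mpr ⟨h1, h2⟩
  have hsq : u^2 ≤ 1 := by nlinarith
  have hcube : |u^3| ≤ 1 := by rw [abs_pow]; exact pow_le_one₀ (abs_nonneg u) hu
  have hfifth : |u^5| ≤ 1 := by rw [abs_pow]; exact pow_le_one₀ (abs_nonneg u) hu
  have ht : |u - u^3/6| ≤ 1 := by
    rw [abs_le]; constructor <;> nlinarith [sq_nonneg (1 + u), sq_nonneg (1 - u)]
  have hQ : 0 ≤ 1/6 + u/12 - u^2/72 - u^3/72 + u^5/1296 - 5/96 * (1 - u^2/6)^4 := by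
    have : (1 - u^2/6)^4 ≤ 1 := pow_le_one₀ (by nlinarith) (by nlinarith)
    linarith [(abs_le.mp hcube).2, (abs_le.mp hfifth).1]
  calc exp (u - u^3/6)
        ≤ 1 + (u - u^3/6) + (u - u^3/6)^2/2 + (u - u^3/6)^3/6 + 5/96 * (u - u^3/6)^4 :=
          exp_le_quartic_of_abs_le_one ht
    _ = 1 + u + u^2/2 -
          u^4 * (1/6 + u/12 - u^2/72 - u^3/72 + u^5/1296 - 5/96 * (1 - u^2/6)^4) := by ring
    _ ≤ 1 + u + u^2/2 := sub_le_self _ (by positivity)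

theorem stmt_0 : ∀ u : ℝ, dh u ≤ Real.log (1 + u + u^2/2) := by
  intro u
  have hhalf : 1/2 ≤ 1 + u + u^2/2 := by nlinarith [sq_nonneg (1 + u)]
  rw [Real.le_log_iff_exp_le (by linarith)]
  unfold dh
  split_ifs with hgt hlt
  · have hone : exp (5/6) ≤ 5/2 := by
      convert exp_sub_cube_div_six_le (u := 1) (by norm_num) le_rfl using 2 <;> norm_num
    nlinarith
  · have hneg_one : exp (-5/6) ≤ 1/2 := by
      convert exp_sub_cube_div_six_le (u := -1) le_rfl (by norm_num) using 2 <;> norm_num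
    linarith
  · exact exp_sub_cube_div_six_le (by linarith) (by linarith)
end

section
/- For all real u, -ln(1 - u + u²/2) ≤ d_h(u), where d_h(u) = (5/6)·1[u>1] + (u - u³/6)·1[-1≤u≤1] - (5/6)·1[u<-1]. -/
noncomputable def gfun (u : ℝ) : ℝ := (1 - u + u^2/2) * Real.exp (u - u^3/6)

lemma gfun_hasDeriv (u : ℝ) :
    HasDerivAt gfun (Real.exp (u - u^3/6) * (u^3/2 - u^4/4)) u := by
  have h1 : HasDerivAt (fun x : ℝ => 1 - x + x^2/2) (u - 1) u := by
    have h : HasDerivAt (fun x : ℝ => 1 - x + x^2/2)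
        (0 - 1 + (↑2 * u^(2-1) * 1)/2) u :=
      (((hasDerivAt_const u (1:ℝ)).sub (hasDerivAt_id u)).add
        ((((hasDerivAt_id u).pow 2)).div_const 2))
    convert h using 1; ring
  have h2 : HasDerivAt (fun x : ℝ => x - x^3/6) (1 - u^2/2) u := by
    have h : HasDerivAt (fun x : ℝ => x - x^3/6)
        (1 - (↑3 * u^(3-1) * 1)/6) u :=
      ((hasDerivAt_id u).sub ((((hasDerivAt_id u).pow 3)).div_const 6))
    convert h using 1; ring
  have h3 := h2.exp
  have h4 := h1.mul h3
  convert h4 using 1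
  · rfl
  · rfl
  · rfl
  ring

lemma gfun_ge_one {u : ℝ} (h1 : -1 ≤ u) (h2 : u ≤ 1) : 1 ≤ gfun u := by
  have hc : ContinuousOn gfun (Set.univ) := by
    unfold gfun; fun_prop
  have g0 : gfun 0 = 1 := by simp [gfun]
  rcases le_or_gt u 0 with hu | hu
  · have anti : AntitoneOn gfun (Set.Icc (-1 : ℝ) 0) := by
      apply antitoneOn_of_deriv_nonpos (convex_Icc _ _) (hc.mono (Set.subset_univ _))
      · intro x hx
        exact (gfun_hasDeriv x).differentiableAt.differentiableWithinAt
      · intro x hx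
        rw [(gfun_hasDeriv x).deriv]
        rw [interior_Icc, Set.mem_Ioo] at hx
        have he := Real.exp_pos (x - x^3/6)
        have h3 : x^3 ≤ 0 := by nlinarith [sq_nonneg x]
        have h4 : (0:ℝ) ≤ x^4 := by positivity
        have h5 : x^3/2 - x^4/4 ≤ 0 := by linarith
        exact mul_nonpos_of_nonneg_of_nonpos he.le h5
    have := anti ⟨h1, hu⟩ ⟨by norm_num, le_refl (0:ℝ)⟩ hu
    rw [g0] at this; linarith
  · have mono : MonotoneOn gfun (Set.Icc (0 : ℝ) 1) := by
      apply monotoneOn_of_deriv_nonneg (convex_Icc _ _) (hc.mono (Set.subset_univ _))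
      · intro x hx
        exact (gfun_hasDeriv x).differentiableAt.differentiableWithinAt
      · intro x hx
        rw [(gfun_hasDeriv x).deriv]
        rw [interior_Icc, Set.mem_Ioo] at hx
        have he := Real.exp_pos (x - x^3/6)
        have h3 : (0:ℝ) ≤ x^3 := pow_nonneg hx.1.le 3
        have h5 : 0 ≤ x^3/2 - x^4/4 := by nlinarith
        exact mul_nonneg he.le h5
    have := mono ⟨le_refl (0:ℝ), by norm_num⟩ ⟨hu.le, h2⟩ hu.le
    rw [g0] at this; linarith

theorem stmt_1 : ∀ u : ℝ, -Real.log (1 - u + u^2/2) ≤ dh u := by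
  intro u
  have hpos : (0:ℝ) < 1 - u + u^2/2 := by nlinarith [sq_nonneg (u - 1)]
  rw [neg_le, Real.le_log_iff_exp_le hpos]
  unfold dh
  split_ifs with h1 h2
  · -- u > 1 : exp(-(5/6)) ≤ 1 - u + u^2/2 ; RHS ≥ 1/2, exp(-5/6) < 1/2
    have key : Real.exp (-(5/6 : ℝ)) ≤ 1/2 := by
      have h : (1 + 5/12 : ℝ) ≤ Real.exp (5/12) := by
        have := Real.add_one_le_exp (5/12 : ℝ); linarith
      have h2 : (2:ℝ) ≤ Real.exp (5/6) := by
        have : Real.exp (5/6 : ℝ) = Real.exp (5/12) * Real.exp (5/12) := by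
          rw [← Real.exp_add]; norm_num
        nlinarith [Real.exp_pos (5/12 : ℝ)]
      rw [Real.exp_neg]
      rw [inv_le_comm₀ (Real.exp_pos _) (by norm_num)]
      linarith
    nlinarith [sq_nonneg (u - 1)]
  · -- u < -1 : exp(5/6) ≤ 1 - u + u^2/2 ; RHS > 5/2, exp(5/6) ≤ (36/31)^6 < 5/2
    have key : Real.exp ((5:ℝ)/6) ≤ 5/2 := by
      have h : (1 - 5/36 : ℝ) ≤ Real.exp (-(5/36)) := by
        have := Real.add_one_le_exp (-(5/36) : ℝ); linarith
      have hp : (0:ℝ) < 31/36 := by norm_num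
      have h6 : ((31:ℝ)/36)^6 ≤ Real.exp (-(5/36)) ^ 6 := by
        apply pow_le_pow_left₀ hp.le
        linarith
      have hrw : Real.exp (-(5/36):ℝ) ^ 6 = Real.exp (-(5/6)) := by
        rw [← Real.exp_nat_mul]; norm_num
      rw [hrw] at h6
      rw [Real.exp_neg] at h6
      have hexp := Real.exp_pos ((5:ℝ)/6)
      rw [le_inv_comm₀ (by norm_num) hexp] at h6
      calc Real.exp ((5:ℝ)/6) ≤ (36/31)^6 := by
            rw [show ((36:ℝ)/31) = ((31:ℝ)/36)⁻¹ by norm_num, inv_pow] at *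
            exact h6
        _ ≤ 5/2 := by norm_num
    rw [show (-(-5/6):ℝ) = 5/6 by norm_num]
    nlinarith [sq_nonneg (u + 1)]
  · -- -1 ≤ u ≤ 1 : exp(u^3/6 - u) ≤ 1 - u + u^2/2
    push_neg at h1 h2
    have hg := gfun_ge_one h2 h1
    unfold gfun at hg
    have hep := Real.exp_pos (u^3/6 - u)
    have : Real.exp (u - u^3/6) * Real.exp (u^3/6 - u) = 1 := by
      rw [← Real.exp_add]; norm_num
    have goal : Real.exp (-(u - u^3/6)) ≤ 1 - u + u^2/2 := by
      have hmul := mul_le_mul_of_nonneg_right hg hep.le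
      rw [one_mul, mul_assoc, this, mul_one] at hmul
      rw [show -(u - u^3/6) = u^3/6 - u by ring]
      exact hmul
    exact goal
end

section
/- Let X₁,...,Xₙ be iid copies of a random variable X, let λ > 0, m > 0, and define Ψ_λ(m) = (1/n)·Σᵢ λ⁻¹ d_h(λ(Xᵢ/m - 1)). Then P(Ψ_λ(m) ≥ 0) ≤ (E[1 + U + U²/2])^n where U = λ(X/m - 1), provided E[X²] < ∞. -/
open MeasureTheory ProbabilityTheory

lemma exp_le_poly4 {u : ℝ} (h0 : 0 ≤ u) (h1 : u ≤ 1) :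
    Real.exp u ≤ 1 + u + u^2/2 + u^3/6 + u^4/6 := by
  have := Real.exp_bound' h0 h1 (n := 4) (by norm_num)
  simp [Finset.sum_range_succ, Nat.factorial] at this
  nlinarith [pow_nonneg h0 4, pow_le_one₀ h0 h1 (n := 4)]

lemma exp_le_poly2 {t : ℝ} (h0 : 0 ≤ t) (h1 : t ≤ 1) :
    Real.exp t ≤ 1 + t + t^2 := by
  have := Real.exp_bound' h0 h1 (n := 2) (by norm_num)
  simp [Finset.sum_range_succ, Nat.factorial] at this
  nlinarith [sq_nonneg t]

lemma exp_dh_le (u : ℝ) : Real.exp (dh u) ≤ 1 + u + u^2/2 := by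
  have e56 : Real.exp (5/6) ≤ 5/2 := by
    have h6 : Real.exp (5/6) ^ 6 ≤ (5/2:ℝ)^6 := by
      have he : Real.exp (5/6) ^ 6 = Real.exp 5 := by
        rw [← Real.exp_nat_mul]; norm_num
      rw [he]
      have h5 : Real.exp 5 = (Real.exp 1)^5 := by rw [← Real.exp_nat_mul]; norm_num
      rw [h5]
      calc (Real.exp 1)^5 ≤ (2.7182818286:ℝ)^5 :=
            pow_le_pow_left₀ (Real.exp_pos 1).le Real.exp_one_lt_d9.le 5
        _ ≤ (5/2:ℝ)^6 := by norm_num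
    exact le_of_pow_le_pow_left₀ (by norm_num) (by norm_num) h6
  have e2 : (2:ℝ) ≤ Real.exp (5/6) := by
    have := Real.quadratic_le_exp_of_nonneg (x := 5/6) (by norm_num)
    nlinarith
  unfold dh
  split_ifs with h1 h2
  · nlinarith
  · -- u < -1 : exp(-5/6) ≤ 1/2 ≤ 1+u+u²/2
    have : Real.exp (-(5/6)) ≤ 1/2 := by
      rw [Real.exp_neg]
      rw [inv_le_comm₀ (Real.exp_pos _) (by norm_num)]
      linarith
    calc Real.exp (-5/6) = Real.exp (-(5/6)) := by norm_num
      _ ≤ 1/2 := this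
      _ ≤ 1 + u + u^2/2 := by nlinarith [sq_nonneg (u+1)]
  · push_neg at h1 h2
    rcases le_or_gt 0 u with hu | hu
    · -- 0 ≤ u ≤ 1
      have key : Real.exp (u - u^3/6) * Real.exp (u^3/6) ≤ (1 + u + u^2/2) * Real.exp (u^3/6) := by
        rw [← Real.exp_add]
        have hsimp : u - u^3/6 + u^3/6 = u := by ring
        rw [hsimp]
        calc Real.exp u ≤ 1 + u + u^2/2 + u^3/6 + u^4/6 := exp_le_poly4 hu h1
          _ ≤ (1 + u + u^2/2) * (1 + u^3/6) := by nlinarith [pow_nonneg hu 3, pow_nonneg hu 4, pow_nonneg hu 5]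
          _ ≤ (1 + u + u^2/2) * Real.exp (u^3/6) := by
              apply mul_le_mul_of_nonneg_left _ (by nlinarith)
              have := Real.add_one_le_exp (u^3/6); linarith
      exact le_of_mul_le_mul_right key (Real.exp_pos _)
    · -- -1 ≤ u < 0. v := -u
      set v := -u with hv
      have hv0 : 0 ≤ v := by simp [hv]; linarith
      have hv1 : v ≤ 1 := by simp [hv]; linarith
      have hexpv : 1 + v + v^2/2 + v^3/6 ≤ Real.exp v := by
        have := Real.sum_le_exp_of_nonneg hv0 4
        simp [Finset.sum_range_succ, Nat.factorial] at this
        nlinarith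
      have ht1 : v^3/6 ≤ 1 := by nlinarith [pow_le_one₀ hv0 hv1 (n := 3)]
      have ht0 : 0 ≤ v^3/6 := by positivity
      have hB : Real.exp (v^3/6) ≤ 1 + v^3/6 + (v^3/6)^2 := exp_le_poly2 ht0 ht1
      have hdenpos : (0:ℝ) < 1 + v + v^2/2 + v^3/6 := by positivity
      have key : Real.exp (u - u^3/6) * Real.exp v ≤ (1 + u + u^2/2) * Real.exp v := by
        rw [← Real.exp_add]
        have h1' : u - u^3/6 + v = v^3/6 := by simp only [hv]; ring
        rw [h1']
        calc Real.exp (v^3/6) ≤ 1 + v^3/6 + (v^3/6)^2 := hB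
          _ ≤ (1 - v + v^2/2) * (1 + v + v^2/2 + v^3/6) := by
              nlinarith [pow_nonneg hv0 3, pow_nonneg hv0 4, pow_nonneg hv0 5, pow_nonneg hv0 6, pow_le_one₀ hv0 hv1 (n := 2)]
          _ ≤ (1 + u + u^2/2) * Real.exp v := by
              have : (1:ℝ) + u + u^2/2 = 1 - v + v^2/2 := by simp only [hv]; ring
              rw [this]
              apply mul_le_mul_of_nonneg_left hexpv (by nlinarith)
      exact le_of_mul_le_mul_right key (Real.exp_pos _)

lemma dh_measurable : Measurable dh := by
  unfold dh
  refine Measurable.ite (measurableSet_lt measurable_const measurable_id) measurable_const ?_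
  refine Measurable.ite (measurableSet_lt measurable_id measurable_const) measurable_const ?_
  fun_prop

lemma dh_abs_le (u : ℝ) : |dh u| ≤ 5/6 := by
  unfold dh
  rw [abs_le]
  split_ifs with h1 h2
  · constructor <;> norm_num
  · constructor <;> norm_num
  · push_neg at h1 h2
    constructor <;> nlinarith [sq_nonneg u, sq_nonneg (u-1), sq_nonneg (u+1)]

theorem stmt_9 {Ω : Type*} [MeasureSpace Ω] [IsProbabilityMeasure (ℙ : Measure Ω)]
    (n : ℕ) (hn : 0 < n) (X : Fin n → Ω → ℝ) (X0 : Ω → ℝ) (l m : ℝ)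
    (hl : 0 < l) (hm : 0 < m)
    (hX0 : MemLp X0 2 ℙ)
    (hmeas : ∀ i, Measurable (X i))
    (hindep : iIndepFun X ℙ)
    (hident : ∀ i, Measure.map (X i) ℙ = Measure.map X0 ℙ) :
    (ℙ {ω | 0 ≤ (1/(n:ℝ)) * ∑ i, l⁻¹ * dh (l * (X i ω / m - 1))}).toReal ≤
      (∫ ω, (1 + l * (X0 ω / m - 1) + (l * (X0 ω / m - 1))^2 / 2))^n := by
  have exp_dh_le : ∀ u : ℝ, Real.exp (dh u) ≤ 1 + u + u^2/2 := fun u => exp_dh_le u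
  set g : ℝ → ℝ := fun x => dh (l * (x / m - 1)) with hg
  have hgmeas : Measurable g := dh_measurable.comp (by fun_prop)
  set Y : Fin n → Ω → ℝ := fun i => g ∘ X i with hY
  have hYmeas : ∀ i, Measurable (Y i) := fun i => hgmeas.comp (hmeas i)
  have hYindep : iIndepFun Y ℙ :=
    hindep.comp (fun _ => g) (fun _ => hgmeas)
  have hX0m : AEMeasurable X0 ℙ := hX0.aestronglyMeasurable.aemeasurable
  -- event rewriting
  have hset : {ω | 0 ≤ (1/(n:ℝ)) * ∑ i, l⁻¹ * dh (l * (X i ω / m - 1))}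
      = {ω | (0:ℝ) ≤ (∑ i, Y i) ω} := by
    ext ω
    rw [Set.mem_setOf_eq, Set.mem_setOf_eq, Finset.sum_apply]
    simp only [hY, Function.comp_apply, hg]
    rw [← Finset.mul_sum, ← mul_assoc]
    have hc : (0:ℝ) < 1/(n:ℝ) * l⁻¹ := by positivity
    constructor
    · intro h; exact nonneg_of_mul_nonneg_right h hc
    · intro h; exact mul_nonneg hc.le h
  rw [hset]
  -- integrability of exp of Y's
  have hYbd : ∀ i, ∀ ω, ‖Real.exp (1 * Y i ω)‖ ≤ Real.exp (5/6) := by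
    intro i ω
    rw [Real.norm_eq_abs, abs_of_pos (Real.exp_pos _), one_mul]
    exact Real.exp_le_exp.2 ((abs_le.1 (dh_abs_le _)).2)
  have hint : ∀ i, Integrable (fun ω => Real.exp (1 * Y i ω)) ℙ := by
    intro i
    refine Integrable.mono' (integrable_const (Real.exp (5/6)))
      (((hYmeas i).const_mul 1).exp.aestronglyMeasurable) ?_
    filter_upwards with ω using hYbd i ω
  have hsumapp : (∑ i, Y i) = fun ω => ∑ i, Y i ω := by
    funext ω; exact Finset.sum_apply ω Finset.univ Y
  have hintS : Integrable (fun ω => Real.exp (1 * (∑ i, Y i) ω)) ℙ := by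
    rw [hsumapp]
    refine Integrable.mono' (integrable_const (Real.exp ((n:ℝ) * (5/6))))
      (((Finset.measurable_sum Finset.univ fun i _ => hYmeas i).const_mul 1).exp.aestronglyMeasurable) ?_
    filter_upwards with ω
    rw [Real.norm_eq_abs, abs_of_pos (Real.exp_pos _), one_mul]
    apply Real.exp_le_exp.2
    calc ∑ i, Y i ω ≤ ∑ _i : Fin n, (5/6 : ℝ) :=
          Finset.sum_le_sum fun i _ => (abs_le.1 (dh_abs_le _)).2
      _ = (n:ℝ) * (5/6) := by simp [Finset.sum_const, mul_comm]
  -- Chernoff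
  have hcher := measure_ge_le_exp_mul_mgf (X := ∑ i, Y i) (μ := ℙ) 0 zero_le_one hintS
  simp only [mul_zero, neg_zero, Real.exp_zero, one_mul] at hcher
  refine hcher.trans ?_
  rw [hYindep.mgf_sum hYmeas Finset.univ]
  -- each mgf equals ∫ exp (g (X0))
  have hmgf : ∀ i, mgf (Y i) ℙ 1 = ∫ ω, Real.exp (g (X0 ω)) := by
    intro i
    rw [mgf]
    simp only [one_mul]
    calc (∫ ω, Real.exp (Y i ω) ∂ℙ)
        = ∫ x, Real.exp (g x) ∂(Measure.map (X i) ℙ) :=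
          (integral_map (hmeas i).aemeasurable hgmeas.exp.aestronglyMeasurable).symm
      _ = ∫ x, Real.exp (g x) ∂(Measure.map X0 ℙ) := by rw [hident i]
      _ = ∫ ω, Real.exp (g (X0 ω)) :=
          integral_map hX0m hgmeas.exp.aestronglyMeasurable
  simp only [hmgf]
  rw [Finset.prod_const, Finset.card_univ, Fintype.card_fin]
  -- comparison of integrals
  have hc0 : 0 ≤ ∫ ω, Real.exp (g (X0 ω)) :=
    integral_nonneg fun ω => (Real.exp_pos _).le
  refine pow_le_pow_left₀ hc0 ?_ n
  have hintc : Integrable (fun ω => Real.exp (g (X0 ω))) ℙ := by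
    refine Integrable.mono' (integrable_const (Real.exp (5/6)))
      ((hgmeas.exp.comp_aemeasurable hX0m).aestronglyMeasurable) ?_
    filter_upwards with ω
    rw [Real.norm_eq_abs, abs_of_pos (Real.exp_pos _)]
    exact Real.exp_le_exp.2 ((abs_le.1 (dh_abs_le _)).2)
  have hintd : Integrable (fun ω => 1 + l * (X0 ω / m - 1) + (l * (X0 ω / m - 1))^2 / 2) ℙ := by
    have hi1 : Integrable X0 ℙ := hX0.integrable one_le_two
    have hi2 : Integrable (fun ω => X0 ω ^ 2) ℙ := hX0.integrable_sq
    have heq : (fun ω => 1 + l * (X0 ω / m - 1) + (l * (X0 ω / m - 1))^2 / 2)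
        = fun ω => (l^2/(2*m^2)) * X0 ω ^ 2 + ((l/m - l^2/m) * X0 ω + (1 - l + l^2/2)) := by
      funext ω; field_simp; ring
    rw [heq]
    exact (hi2.const_mul _).add ((hi1.const_mul _).add (integrable_const _))
  exact integral_mono hintc hintd fun ω => exp_dh_le _
end

section
/- Let X be a nonnegative random variable with mean μ > 0 and Var(X) ≤ c²μ², let 0 < ε < 1, λ = ε(1-ε²)/(c²+ε²), and let X₁,...,Xₙ be iid copies of X. With Ψ_λ(m) = Σᵢ d_h(λ(Xᵢ/m - 1)), one has P(Ψ_λ((1-ε)μ) ≤ 0) ≤ [1 - (1/2)·ε²(1-ε²)/(c²+ε²)]^n. -/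
open MeasureTheory ProbabilityTheory

lemma exp_five_sixth_le : Real.exp (5/6) ≤ 5/2 := by
  have h1 : Real.exp (5/6) * Real.exp (1/6) = Real.exp 1 := by
    rw [← Real.exp_add]; norm_num
  have h2 : (7:ℝ)/6 ≤ Real.exp (1/6) := by
    have := Real.add_one_le_exp (1/6 : ℝ); linarith
  have h3 : Real.exp 1 < 2.7182818286 := Real.exp_one_lt_d9
  nlinarith [Real.exp_pos (5/6 : ℝ)]

lemma two_le_exp_five_sixth : (2:ℝ) ≤ Real.exp (5/6) := by
  have h1 : Real.exp (5/12) * Real.exp (5/12) = Real.exp (5/6) := by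
    rw [← Real.exp_add]; norm_num
  have h2 : (17:ℝ)/12 ≤ Real.exp (5/12) := by
    have := Real.add_one_le_exp (5/12 : ℝ); linarith
  nlinarith

lemma hasDerivAt_g (u : ℝ) :
    HasDerivAt (fun v => (1 - v + v^2/2) * Real.exp (v - v^3/6))
      (Real.exp (u - u^3/6) * (u^3*(2-u)/4)) u := by
  have h1 : HasDerivAt (fun v : ℝ => 1 - v + v^2/2) (0 - 1 + 2 * u ^ 1 / 2) u :=
    ((hasDerivAt_const u (1:ℝ)).sub (hasDerivAt_id u)).add ((hasDerivAt_pow 2 u).div_const 2)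
  have h2 : HasDerivAt (fun v : ℝ => v - v^3/6) (1 - 3 * u ^ 2 / 6) u :=
    (hasDerivAt_id u).sub ((hasDerivAt_pow 3 u).div_const 6)
  have h : HasDerivAt (fun v => (1 - v + v^2/2) * Real.exp (v - v^3/6)) _ u := h1.mul h2.exp
  convert h using 1
  ring

lemma g_ge_one {u : ℝ} (hu : u ∈ Set.Icc (-1:ℝ) 1) :
    1 ≤ (1 - u + u^2/2) * Real.exp (u - u^3/6) := by
  set g : ℝ → ℝ := fun v => (1 - v + v^2/2) * Real.exp (v - v^3/6) with hg
  have hcont : Continuous g := by fun_prop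
  have hdiff : ∀ x : ℝ, DifferentiableAt ℝ g x := fun x => (hasDerivAt_g x).differentiableAt
  have hg0 : g 0 = 1 := by simp [hg]
  have hmono : MonotoneOn g (Set.Icc 0 1) := by
    apply monotoneOn_of_deriv_nonneg (convex_Icc 0 1) hcont.continuousOn
      (fun x _ => (hdiff x).differentiableWithinAt)
    intro x hx
    rw [interior_Icc] at hx
    rw [(hasDerivAt_g x).deriv]
    have e1 := Real.exp_pos (x - x^3/6)
    have e2 : 0 < x^3 * (2-x) / 4 := by
      have := pow_pos hx.1 3
      have : (0:ℝ) < 2 - x := by linarith [hx.2]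
      positivity
    positivity
  have hanti : AntitoneOn g (Set.Icc (-1) 0) := by
    apply antitoneOn_of_deriv_nonpos (convex_Icc (-1) 0) hcont.continuousOn
      (fun x _ => (hdiff x).differentiableWithinAt)
    intro x hx
    rw [interior_Icc] at hx
    rw [(hasDerivAt_g x).deriv]
    have e1 := Real.exp_pos (x - x^3/6)
    have hx3 : x^3 ≤ 0 := Odd.pow_nonpos ⟨1, by norm_num⟩ hx.2.le
    have e2 : x^3 * (2-x) / 4 ≤ 0 := by
      nlinarith [mul_nonneg (neg_nonneg.2 hx3) (by linarith [hx.2] : (0:ℝ) ≤ 2 - x)]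
    exact mul_nonpos_of_nonneg_of_nonpos e1.le e2
  rcases le_total u 0 with h | h
  · have := hanti (Set.mem_Icc.2 ⟨hu.1, h⟩) (Set.mem_Icc.2 ⟨by norm_num, le_refl 0⟩) h
    rw [hg0] at this; exact this
  · have := hmono (Set.mem_Icc.2 ⟨le_refl 0, by norm_num⟩) (Set.mem_Icc.2 ⟨h, hu.2⟩) h
    rw [hg0] at this; exact this

lemma exp_neg_dh_le (u : ℝ) : Real.exp (-(dh u)) ≤ 1 - u + u^2/2 := by
  unfold dh
  by_cases h1 : u > 1
  · rw [if_pos h1]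
    have h2 : Real.exp (-(5/6 : ℝ)) ≤ 1/2 := by
      rw [Real.exp_neg]
      have h := two_le_exp_five_sixth
      have hp := Real.exp_pos (5/6 : ℝ)
      have hiv : (Real.exp (5/6))⁻¹ * Real.exp (5/6) = 1 := inv_mul_cancel₀ hp.ne'
      nlinarith [inv_nonneg.2 hp.le]
    nlinarith [sq_nonneg (u - 1)]
  · by_cases h2 : u < -1
    · rw [if_neg h1, if_pos h2]
      have harg : (-(-5/6 : ℝ)) = 5/6 := by norm_num
      rw [harg]
      have := exp_five_sixth_le
      nlinarith [sq_nonneg (u + 1)]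
    · rw [if_neg h1, if_neg h2]
      push_neg at h1 h2
      have hu : u ∈ Set.Icc (-1:ℝ) 1 := Set.mem_Icc.2 ⟨h2, h1⟩
      have hge := g_ge_one hu
      have hpos : 0 < Real.exp (u - u^3/6) := Real.exp_pos _
      rw [Real.exp_neg]
      have hiv : (Real.exp (u - u^3/6))⁻¹ * Real.exp (u - u^3/6) = 1 :=
        inv_mul_cancel₀ hpos.ne'
      nlinarith [inv_nonneg.2 hpos.le]

lemma dh_ge (u : ℝ) : -(5/6 : ℝ) ≤ dh u := by
  unfold dh
  by_cases h1 : u > 1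
  · rw [if_pos h1]; norm_num
  · by_cases h2 : u < -1
    · rw [if_neg h1, if_pos h2]; norm_num
    · rw [if_neg h1, if_neg h2]
      push_neg at h1 h2
      nlinarith [mul_nonneg (by linarith : (0:ℝ) ≤ u + 1)
        (by nlinarith : (0:ℝ) ≤ 5 + u - u^2)]

lemma integral_prod_of_indep {Ω : Type*} [MeasureSpace Ω] [IsProbabilityMeasure (ℙ : Measure Ω)]
    {ι : Type*} {Y : ι → Ω → ℝ} (hind : iIndepFun Y ℙ)
    (hm : ∀ i, Measurable (Y i)) (hint : ∀ i, Integrable (Y i) ℙ) (s : Finset ι) :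
    Integrable (∏ i ∈ s, Y i) ℙ ∧ ∫ ω, ∏ i ∈ s, Y i ω = ∏ i ∈ s, ∫ ω, Y i ω := by
  classical
  induction s using Finset.induction_on with
  | empty => exact ⟨by rw [Finset.prod_empty]; exact integrable_const (1:ℝ), by simp⟩
  | @insert i s hi ih =>
    have hindep : IndepFun (Y i) (∏ j ∈ s, Y j) ℙ :=
      (hind.indepFun_finsetProd_of_notMem hm hi).symm
    have hint_prod := ih.1
    constructor
    · rw [Finset.prod_insert hi]
      exact hindep.integrable_mul (hint i) hint_prod
    · have key := hindep.integral_mul_eq_mul_integral (hint i).aestronglyMeasurable hint_prod.aestronglyMeasurable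
      simp only [Finset.prod_insert hi]
      have h1 : ∫ ω, Y i ω * ∏ j ∈ s, Y j ω = integral ℙ (Y i * ∏ j ∈ s, Y j) := by
        congr 1; ext ω; simp [Finset.prod_apply]
      have h2 : integral ℙ (∏ j ∈ s, Y j) = ∫ ω, ∏ j ∈ s, Y j ω := by
        congr 1; ext ω; simp [Finset.prod_apply]
      rw [h1, key, h2, ih.2]

set_option maxHeartbeats 1000000 in
theorem stmt_11 {Ω : Type*} [MeasureSpace Ω] [IsProbabilityMeasure (ℙ : Measure Ω)]
    (n : ℕ) (hn : 0 < n) (X : Fin n → Ω → ℝ) (X0 : Ω → ℝ) (μ c ε : ℝ)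
    (hμ : 0 < μ) (hc : 0 < c) (hε : 0 < ε) (hε1 : ε < 1)
    (hX0 : MemLp X0 2 ℙ) (hpos : ∀ᵐ ω ∂(ℙ : Measure Ω), 0 ≤ X0 ω)
    (hmean : (∫ ω, X0 ω) = μ) (hvar : variance X0 ℙ ≤ c^2 * μ^2)
    (hmeas : ∀ i, Measurable (X i))
    (hindep : iIndepFun X ℙ)
    (hident : ∀ i, Measure.map (X i) ℙ = Measure.map X0 ℙ) :
    (ℙ {ω | ∑ i, dh ((ε * (1 - ε^2) / (c^2 + ε^2)) * (X i ω / ((1 - ε) * μ) - 1)) ≤ 0}).toReal ≤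
      (1 - (1/2) * (ε^2 * (1 - ε^2) / (c^2 + ε^2)))^n := by
  have hcε : (0:ℝ) < c^2 + ε^2 := by positivity
  have h1ε : (0:ℝ) < 1 - ε := by linarith
  set l : ℝ := ε * (1 - ε^2) / (c^2 + ε^2) with hl
  set m : ℝ := (1 - ε) * μ with hm
  set r : ℝ := 1 - (1/2) * (ε^2 * (1 - ε^2) / (c^2 + ε^2)) with hr
  have hm_pos : (0:ℝ) < m := by rw [hm]; positivity
  set F : ℝ → ℝ := fun x => Real.exp (-(dh (l * (x / m - 1)))) with hF
  have hFmeas : Measurable F := by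
    apply Real.measurable_exp.comp
    exact (dh_measurable.comp (by fun_prop)).neg
  have hFpos : ∀ x, 0 < F x := fun x => Real.exp_pos _
  have hFbd : ∀ x, F x ≤ Real.exp (5/6) := fun x =>
    Real.exp_le_exp.2 (by linarith [dh_ge (l * (x / m - 1))])
  set Y : Fin n → Ω → ℝ := fun i => F ∘ X i with hY
  have hYmeas : ∀ i, Measurable (Y i) := fun i => hFmeas.comp (hmeas i)
  have hYint : ∀ i, Integrable (Y i) ℙ := fun i =>
    (integrable_const (Real.exp (5/6))).mono' ((hYmeas i).aestronglyMeasurable)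
      (ae_of_all _ fun ω => by
        show ‖F (X i ω)‖ ≤ _
        rw [Real.norm_eq_abs, abs_of_pos (hFpos _)]; exact hFbd _)
  have hYindep : iIndepFun Y ℙ :=
    hindep.comp (fun _ => F) (fun _ => hFmeas)
  obtain ⟨hPint, hPeq⟩ := integral_prod_of_indep hYindep hYmeas hYint Finset.univ
  -- Markov step
  have hsub : {ω | ∑ i, dh (l * (X i ω / m - 1)) ≤ 0} ⊆
      {ω | (1:ℝ) ≤ (∏ i, Y i) ω} := by
    intro ω hω
    simp only [Set.mem_setOf_eq] at hω ⊢
    have hprod : (∏ i, Y i) ω = Real.exp (∑ i, -(dh (l * (X i ω / m - 1)))) := by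
      rw [Real.exp_sum]
      simp [hY, hF, Finset.prod_apply]
    rw [hprod]
    refine Real.one_le_exp ?_
    rw [Finset.sum_neg_distrib]
    linarith
  have hM : 1 * (ℙ {ω | (1:ℝ) ≤ (∏ i, Y i) ω}).toReal ≤ ∫ ω, (∏ i, Y i) ω :=
    mul_meas_ge_le_integral_of_nonneg
      (ae_of_all _ fun ω => by
        rw [Finset.prod_apply]
        exact Finset.prod_nonneg fun i _ => (hFpos _).le)
      hPint 1
  -- bound on each integral
  have hX0m : AEMeasurable X0 ℙ := hX0.aestronglyMeasurable.aemeasurable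
  have hint1 : Integrable X0 ℙ := hX0.integrable one_le_two
  have hint2 : Integrable (fun ω => X0 ω^2) ℙ := hX0.integrable_sq
  set a : ℝ := 1 + l + l^2/2 with ha
  set b : ℝ := -((l + l^2)/m) with hb
  set d : ℝ := l^2/(2*m^2) with hd
  have hd_nonneg : 0 ≤ d := by rw [hd]; positivity
  have hGeq : ∀ x : ℝ, 1 - (l*(x/m - 1)) + (l*(x/m - 1))^2/2 = a + b*x + d*x^2 := by
    intro x
    rw [ha, hb, hd]
    field_simp
    ring
  have hFX0int : Integrable (fun ω => F (X0 ω)) ℙ :=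
    (integrable_const (Real.exp (5/6))).mono'
      ((hFmeas.comp_aemeasurable hX0m).aestronglyMeasurable)
      (ae_of_all _ fun ω => by
        rw [Real.norm_eq_abs, abs_of_pos (hFpos _)]; exact hFbd _)
  have hGint : Integrable (fun ω => a + b * X0 ω + d * X0 ω^2) ℙ :=
    ((integrable_const a).add (hint1.const_mul b)).add (hint2.const_mul d)
  have hImono : ∫ ω, F (X0 ω) ≤ ∫ ω, (a + b * X0 ω + d * X0 ω^2) := by
    refine integral_mono hFX0int hGint fun ω => ?_
    have h := exp_neg_dh_le (l * (X0 ω / m - 1))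
    calc F (X0 ω) ≤ 1 - (l*(X0 ω/m - 1)) + (l*(X0 ω/m - 1))^2/2 := h
      _ = a + b * X0 ω + d * X0 ω^2 := hGeq _
  have i1 : Integrable (fun ω => a + b * X0 ω) ℙ := (integrable_const a).add (hint1.const_mul b)
  have i2 : Integrable (fun ω => d * X0 ω^2) ℙ := hint2.const_mul d
  have hIeq : ∫ ω, (a + b * X0 ω + d * X0 ω^2) = a + b * μ + d * ∫ ω, X0 ω^2 := by
    rw [integral_add i1 i2, integral_add (integrable_const a) (hint1.const_mul b),
      integral_const, integral_const_mul, integral_const_mul, hmean]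
    simp
  have hE2 : ∫ ω, X0 ω^2 ≤ (c^2 + 1) * μ^2 := by
    have hvd := variance_eq_sub hX0
    have hx2 : (ℙ : Measure Ω)[X0 ^ 2] = ∫ ω, X0 ω^2 := by
      congr 1
    rw [hx2] at hvd
    have hmean' : (ℙ : Measure Ω)[X0] = μ := hmean
    rw [hmean'] at hvd
    nlinarith
  have hre : a + b * μ + d * ((c^2 + 1) * μ^2) = r := by
    have hne1 : (c^2 + ε^2) ≠ 0 := hcε.ne'
    have hne2 : (1 - ε) ≠ 0 := h1ε.ne'
    have hne3 : μ ≠ 0 := hμ.ne'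
    rw [ha, hb, hd, hr, hl, hm]
    field_simp
    ring
  have key : ∀ i, ∫ ω, Y i ω ≤ r := by
    intro i
    have h1 : ∫ ω, Y i ω = ∫ ω, F (X0 ω) := by
      calc ∫ ω, Y i ω = ∫ x, F x ∂(Measure.map (X i) ℙ) :=
            (integral_map (hmeas i).aemeasurable hFmeas.aestronglyMeasurable).symm
        _ = ∫ x, F x ∂(Measure.map X0 ℙ) := by rw [hident i]
        _ = ∫ ω, F (X0 ω) := integral_map hX0m hFmeas.aestronglyMeasurable
    rw [h1]
    calc ∫ ω, F (X0 ω) ≤ a + b * μ + d * ∫ ω, X0 ω^2 := by rw [← hIeq]; exact hImono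
      _ ≤ a + b * μ + d * ((c^2 + 1) * μ^2) := by nlinarith
      _ = r := hre
  -- combine
  calc (ℙ {ω | ∑ i, dh (l * (X i ω / m - 1)) ≤ 0}).toReal
      ≤ (ℙ {ω | (1:ℝ) ≤ (∏ i, Y i) ω}).toReal :=
        ENNReal.toReal_mono (measure_ne_top _ _) (measure_mono hsub)
    _ ≤ ∫ ω, (∏ i, Y i) ω := by linarith [hM]
    _ = ∏ i, ∫ ω, Y i ω := by
        rw [← hPeq]
        congr 1
        ext ω
        simp [Finset.prod_apply]
    _ ≤ ∏ _i : Fin n, r :=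
        Finset.prod_le_prod (fun i _ => integral_nonneg fun ω => (hFpos _).le)
          (fun i _ => key i)
    _ = r^n := by simp [Finset.prod_const]
end

section
/- For all u ∈ [-1,1], |u - u³/6 - u| ≤ 1/6, and more precisely u - u³/6 agrees with d_h and lies between -ln(1-u+u²/2) and ln(1+u+u²/2). -/
private lemma qpos (u : ℝ) : (0:ℝ) < 1 + u + u^2/2 := by nlinarith [sq_nonneg (u+1)]

private noncomputable def ff (u : ℝ) : ℝ := Real.log (1 + u + u^2/2) - (u - u^3/6)

private lemma ff_deriv (u : ℝ) :
    HasDerivAt ff ((u^3/2 + u^4/4) / (1 + u + u^2/2)) u := by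
  have h1 : HasDerivAt (fun u : ℝ => 1 + u + u^2/2) (1 + u) u := by
    have : HasDerivAt (fun u : ℝ => 1 + u + u^2/2) (0 + 1 + 2*u^1/2) u := by
      exact ((hasDerivAt_const u 1).add (hasDerivAt_id u)).add
        (((hasDerivAt_pow 2 u)).div_const 2)
    convert this using 1; ring
  have h2 : HasDerivAt (fun u : ℝ => Real.log (1 + u + u^2/2)) ((1+u)/(1 + u + u^2/2)) u :=
    h1.log (qpos u).ne'
  have h3 : HasDerivAt (fun u : ℝ => u - u^3/6) (1 - 3*u^2/6) u :=
    (hasDerivAt_id u).sub ((hasDerivAt_pow 3 u).div_const 6)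
  have := h2.sub h3
  refine this.congr_deriv ?_; symm
  have hq := (qpos u).ne'
  rw [eq_sub_iff_add_eq, div_add' _ _ _ hq, div_eq_div_iff hq hq]
  ring

private lemma ff_nonneg : ∀ u ∈ Set.Icc (-1:ℝ) 1, 0 ≤ ff u := by
  have hcont : Continuous ff := by
    have : Differentiable ℝ ff := fun u => (ff_deriv u).differentiableAt
    exact this.continuous
  have hzero : ff 0 = 0 := by simp [ff]
  have hderiv : ∀ u : ℝ, deriv ff u = (u^3/2 + u^4/4) / (1 + u + u^2/2) :=
    fun u => (ff_deriv u).deriv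
  have hmono : MonotoneOn ff (Set.Icc (0:ℝ) 1) := by
    apply monotoneOn_of_deriv_nonneg (convex_Icc 0 1) hcont.continuousOn
      (fun x _ => (ff_deriv x).differentiableAt.differentiableWithinAt)
    intro x hx
    rw [interior_Icc] at hx
    rw [hderiv]
    have h1 : (0:ℝ) ≤ x^3/2 + x^4/4 := by nlinarith [hx.1.le, sq_nonneg x]
    exact div_nonneg h1 (qpos x).le
  have hanti : AntitoneOn ff (Set.Icc (-1:ℝ) 0) := by
    apply antitoneOn_of_deriv_nonpos (convex_Icc (-1) 0) hcont.continuousOn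
      (fun x _ => (ff_deriv x).differentiableAt.differentiableWithinAt)
    intro x hx
    rw [interior_Icc] at hx
    rw [hderiv]
    apply div_nonpos_of_nonpos_of_nonneg _ (qpos x).le
    nlinarith [mul_nonneg (mul_nonneg (sq_nonneg x) (neg_nonneg.mpr hx.2.le)) (by linarith [hx.1.le] : (0:ℝ) ≤ 2 + x)]
  intro u hu
  rcases le_or_gt 0 u with h | h
  · have := hmono (Set.mem_Icc.mpr ⟨le_refl 0, zero_le_one⟩)
      (Set.mem_Icc.mpr ⟨h, hu.2⟩) h
    rw [hzero] at this; exact this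
  · have := hanti (Set.mem_Icc.mpr ⟨hu.1, h.le⟩)
      (Set.mem_Icc.mpr ⟨by norm_num, le_refl 0⟩) h.le
    rw [hzero] at this; exact this

private lemma key : ∀ u ∈ Set.Icc (-1:ℝ) 1, u - u^3/6 ≤ Real.log (1 + u + u^2/2) := by
  intro u hu
  have := ff_nonneg u hu
  unfold ff at this
  linarith

theorem stmt_15 : ∀ u ∈ Set.Icc (-1 : ℝ) 1,
    |(u - u^3/6) - u| ≤ 1/6 ∧ dh u = u - u^3/6 ∧
    -Real.log (1 - u + u^2/2) ≤ u - u^3/6 ∧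
    u - u^3/6 ≤ Real.log (1 + u + u^2/2) := by
  intro u hu
  obtain ⟨h1, h2⟩ := hu
  refine ⟨?_, ?_, ?_, key u ⟨h1, h2⟩⟩
  · rw [abs_le]
    constructor <;> nlinarith [sq_nonneg u, abs_le.mpr ⟨h1, h2⟩]
  · unfold dh
    rw [if_neg (by linarith), if_neg (by linarith)]
  · have := key (-u) ⟨by linarith, by linarith⟩
    have heq : 1 + (-u) + (-u)^2/2 = 1 - u + u^2/2 := by ring
    rw [heq] at this
    have : -u + u^3/6 ≤ Real.log (1 - u + u^2/2) := by
      have h : (-u) - (-u)^3/6 = -u + u^3/6 := by ring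
      linarith [h ▸ this]
    linarith
end
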